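/- arXiv:2402.11808 — 2 statements merged into one kernel-verified Lean document; each statement's English description precedes it below -/
import Mathlib

section
/- For 0 ≤ r < 1, the power series ∑_{n=2}^∞ r^{2n}/(n²(n-1)²) equals (r²+1)·Li₂(r²) + 2(r²-1)·log(1-r²) - 3r², where Li₂(x) = ∑_{k=1}^∞ x^k/k² is the dilogarithm. -/
/-- The dilogarithm `Li₂(x) = ∑_{k=1}^∞ x^k / k²`. -/
noncomputable def Li2 (x : ℝ) : ℝ := ∑' k : ℕ, x ^ (k + 1) / ((k + 1) : ℝ) ^ 2

theorem sum_r2n_div_sq (r : ℝ) (h0 : 0 ≤ r) (h1 : r < 1) :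
    ∑' n : ℕ, r ^ (2 * (n + 2)) / (((n + 2) : ℝ) ^ 2 * ((n + 1) : ℝ) ^ 2) =
      (r ^ 2 + 1) * Li2 (r ^ 2) + 2 * (r ^ 2 - 1) * Real.log (1 - r ^ 2) - 3 * r ^ 2 := by
  set x := r ^ 2 with hxdef
  have hx0 : 0 ≤ x := sq_nonneg r
  have hx1 : x < 1 := by nlinarith
  have hxabs : |x| < 1 := abs_lt.mpr ⟨by linarith, hx1⟩
  have hlog : HasSum (fun n : ℕ => x ^ (n + 1) / ((n : ℝ) + 1)) (-Real.log (1 - x)) := by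
    simpa using Real.hasSum_pow_div_log_of_abs_lt_one hxabs
  have hsummable : Summable (fun k : ℕ => x ^ (k + 1) / ((k : ℝ) + 1) ^ 2) := by
    apply Summable.of_nonneg_of_le (fun k => by positivity) (fun k => ?_)
      (summable_geometric_of_lt_one hx0 hx1)
    calc x ^ (k + 1) / ((k : ℝ) + 1) ^ 2 ≤ x ^ (k + 1) := by
          apply div_le_self (by positivity)
          nlinarith [Nat.cast_nonneg (α := ℝ) k]
      _ = x * x ^ k := by ring
      _ ≤ 1 * x ^ k := by nlinarith [pow_nonneg hx0 k]
      _ = x ^ k := one_mul _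
  have hLi : HasSum (fun k : ℕ => x ^ (k + 1) / ((k : ℝ) + 1) ^ 2) (Li2 x) := by
    have := hsummable.hasSum
    simpa [Li2] using this
  have hshift : ∀ (f : ℕ → ℝ) (a : ℝ), HasSum f a → HasSum (fun n => f (n + 1)) (a - f 0) := by
    intro f a hf
    rw [hasSum_nat_add_iff 1]
    simpa using hf
  have hA : HasSum (fun n : ℕ => x ^ (n + 2) / ((n : ℝ) + 2) ^ 2) (Li2 x - x) := by
    have := hshift _ _ hLi
    simp only [Nat.cast_add, Nat.cast_one, Nat.cast_zero] at this
    convert this using 2 with n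
    · ring_nf
    · norm_num
  have hB : HasSum (fun n : ℕ => x * (x ^ (n + 1) / ((n : ℝ) + 1) ^ 2)) (x * Li2 x) :=
    hLi.mul_left x
  have hC : HasSum (fun n : ℕ => x ^ (n + 2) / ((n : ℝ) + 2)) (-Real.log (1 - x) - x) := by
    have := hshift _ _ hlog
    convert this using 2 with n
    · push_cast; ring_nf
    · norm_num
  have hD : HasSum (fun n : ℕ => x * (x ^ (n + 1) / ((n : ℝ) + 1))) (x * -Real.log (1 - x)) :=
    hlog.mul_left x
  have H := (hA.add hB).add ((hC.sub hD).mul_left 2)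
  have hfun : (fun n : ℕ => r ^ (2 * (n + 2)) / (((n + 2) : ℝ) ^ 2 * ((n + 1) : ℝ) ^ 2)) =
      fun n : ℕ => x ^ (n + 2) / ((n : ℝ) + 2) ^ 2 + x * (x ^ (n + 1) / ((n : ℝ) + 1) ^ 2)
        + 2 * (x ^ (n + 2) / ((n : ℝ) + 2) - x * (x ^ (n + 1) / ((n : ℝ) + 1))) := by
    funext n
    have hn1 : ((n : ℝ) + 1) ≠ 0 := by positivity
    have hn2 : ((n : ℝ) + 2) ≠ 0 := by positivity
    rw [pow_mul, hxdef]
    field_simp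
    ring
  rw [hfun, H.tsum_eq]
  ring
end

section
/- For the function f_M(z) = z + 2M·∑_{n=2}^∞ z^n/(n(n-1)) with M ≥ 0, liminf_{r→1⁻} inf_{|z|=r} |f_M(z)| ≥ 1 + 2M·(1 - 2·log 2). -/
open Complex intervalIntegral Filter

private lemma aux_repos {z : ℂ} (hz : ‖z‖ < 1) {t : ℝ} (ht0 : 0 ≤ t) (ht1 : t ≤ 1) :
    (0:ℝ) < (1 - (t:ℂ) * z).re := by
  have h1 : |z.re| ≤ ‖z‖ := Complex.abs_re_le_norm z
  simp only [Complex.sub_re, Complex.one_re, Complex.mul_re, Complex.ofReal_re,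
    Complex.ofReal_im]
  nlinarith [abs_le.mp h1]

private lemma aux_ne {z : ℂ} (hz : ‖z‖ < 1) {t : ℝ} (ht0 : 0 ≤ t) (ht1 : t ≤ 1) :
    (1 : ℂ) - (t:ℂ) * z ≠ 0 := by
  intro h
  have := aux_repos hz ht0 ht1
  rw [h] at this
  simp at this

private lemma aux_re_div {z : ℂ} (hz : ‖z‖ < 1) {t : ℝ} (ht0 : 0 ≤ t) (ht1 : t ≤ 1) :
    -1 / (1 + t) ≤ (z / (1 - (t:ℂ) * z)).re := by
  have hw : 0 < Complex.normSq (1 - (t:ℂ) * z) := Complex.normSq_pos.mpr (aux_ne hz ht0 ht1)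
  have hn : z.re ^ 2 + z.im ^ 2 ≤ 1 := by
    have h1 : Complex.normSq z ≤ 1 := by
      nlinarith [Complex.sq_norm z, norm_nonneg z]
    rw [Complex.normSq_apply] at h1; nlinarith
  have hx : -1 ≤ z.re := by nlinarith
  rw [Complex.div_re, ← add_div, div_le_div_iff₀ (by linarith) hw]
  simp only [Complex.normSq_apply, Complex.sub_re, Complex.sub_im, Complex.one_re, Complex.one_im,
    Complex.mul_re, Complex.mul_im, Complex.ofReal_re, Complex.ofReal_im]
  nlinarith [sq_nonneg z.im, mul_nonneg (mul_nonneg ht0 (sq_nonneg z.im)) ht0,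
    mul_nonneg (sub_nonneg.mpr ht1) (by linarith : (0:ℝ) ≤ 1 + z.re),
    mul_nonneg ht0 (sub_nonneg.mpr hn)]

private lemma aux_hasSum {z : ℂ} (hz : ‖z‖ < 1) :
    HasSum (fun n : ℕ => z ^ (n + 2) / ((n + 2 : ℂ) * (n + 1 : ℂ)))
      ((1 - z) * Complex.log (1 - z) + z) := by
  have hz' : ‖z‖ < 1 := hz
  have S := Complex.hasSum_taylorSeries_neg_log hz'
  have T1 := (hasSum_nat_add_iff' (f := fun n : ℕ => z ^ n / (n : ℂ)) 1).mpr S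
  have T2 := (hasSum_nat_add_iff' (f := fun n : ℕ => z ^ n / (n : ℂ)) 2).mpr S
  simp only [Finset.sum_range_succ, Finset.sum_range_zero, Nat.cast_zero, pow_zero,
    div_zero, Nat.cast_one, pow_one, div_one, zero_add, add_zero, sub_zero] at T1 T2
  have S1 : HasSum (fun n : ℕ => z ^ (n + 1) / ((n : ℂ) + 1)) (-Complex.log (1 - z)) := by
    convert T1 using 2 with n
    · rfl
    push_cast
    ring
  have S2 : HasSum (fun n : ℕ => z ^ (n + 2) / ((n : ℂ) + 2))
      (-Complex.log (1 - z) - z) := by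
    convert T2 using 2 with n
    · rfl
    push_cast
    ring
  have B := S1.mul_left z
  have C := B.sub S2
  convert C using 1
  · rfl
  · funext n
    have h1 : (n : ℂ) + 1 ≠ 0 := Nat.cast_add_one_ne_zero n
    have h2 : (n : ℂ) + 2 ≠ 0 := by
      have h : ((n : ℂ) + 2) = ((n + 2 : ℕ) : ℂ) := by push_cast; ring
      rw [h]
      exact_mod_cast (by omega : n + 2 ≠ 0)
    field_simp
    ring
  · ring

private lemma aux_contOn {z : ℂ} (hz : ‖z‖ < 1) :
    ContinuousOn (fun t : ℝ => ((1 : ℂ) - (t:ℂ)) * z ^ 2 / (1 - (t:ℂ) * z))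
      (Set.uIcc (0:ℝ) 1) := by
  apply ContinuousOn.div
  · exact (((continuous_const.sub Complex.continuous_ofReal).mul continuous_const)).continuousOn
  · exact (continuous_const.sub (Complex.continuous_ofReal.mul continuous_const)).continuousOn
  · intro t ht
    rw [Set.uIcc_of_le (by norm_num : (0:ℝ) ≤ 1)] at ht
    exact aux_ne hz ht.1 ht.2

private lemma aux_integral {z : ℂ} (hz : ‖z‖ < 1) :
    (∫ t in (0:ℝ)..1, ((1 : ℂ) - (t:ℂ)) * z ^ 2 / (1 - (t:ℂ) * z))
      = (1 - z) * Complex.log (1 - z) + z := by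
  have h := intervalIntegral.integral_eq_sub_of_hasDerivAt
    (f := fun t : ℝ => (t:ℂ) * z + (1 - z) * Complex.log (1 - (t:ℂ) * z))
    (f' := fun t : ℝ => ((1 : ℂ) - (t:ℂ)) * z ^ 2 / (1 - (t:ℂ) * z))
    (a := 0) (b := 1) ?_ ((aux_contOn hz).intervalIntegrable)
  · rw [h]
    simp [Complex.log_one]
    ring
  · intro t ht
    rw [Set.uIcc_of_le (by norm_num : (0:ℝ) ≤ 1)] at ht
    have hne := aux_ne hz ht.1 ht.2
    have h1 : HasDerivAt (fun t : ℝ => (t:ℂ) * z) z t := by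
      simpa using (Complex.ofRealCLM.hasDerivAt (x := t)).mul_const z
    have hinner : HasDerivAt (fun t : ℝ => (1 : ℂ) - (t:ℂ) * z) (-z) t := by
      simpa [Pi.sub_def] using (hasDerivAt_const t (1:ℂ)).sub h1
    have houter := Complex.hasDerivAt_log (Or.inl (aux_repos hz ht.1 ht.2))
    have hcomp := houter.scomp t hinner
    have h2 := h1.add (hcomp.const_mul (1 - z))
    convert h2 using 1
    · funext y; rfl
    · simp only [smul_eq_mul]
      field_simp
      ring

private lemma aux_real_integral :
    (∫ t in (0:ℝ)..1, (1 - t) / (1 + t)) = 2 * Real.log 2 - 1 := by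
  have h := intervalIntegral.integral_eq_sub_of_hasDerivAt
    (f := fun t : ℝ => 2 * Real.log (1 + t) - t)
    (f' := fun t : ℝ => (1 - t) / (1 + t)) (a := 0) (b := 1) ?_ ?_
  · rw [h]; norm_num
  · intro t ht
    rw [Set.uIcc_of_le (by norm_num : (0:ℝ) ≤ 1)] at ht
    have hpos : (0:ℝ) < 1 + t := by linarith [ht.1]
    have hl : HasDerivAt (fun t : ℝ => Real.log (1 + t)) (1 + t)⁻¹ t := by
      have hi : HasDerivAt (fun t : ℝ => 1 + t) 1 t := (hasDerivAt_id t).const_add 1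
      simpa [Function.comp_def] using (Real.hasDerivAt_log (ne_of_gt hpos)).comp t hi
    have := (hl.const_mul 2).sub (hasDerivAt_id t)
    convert this using 1
    · funext y; simp only [Pi.sub_apply, id_eq]
    · field_simp
      ring
  · apply ContinuousOn.intervalIntegrable
    apply ContinuousOn.div
    · exact (continuous_const.sub continuous_id).continuousOn
    · exact (continuous_const.add continuous_id).continuousOn
    · intro t ht
      rw [Set.uIcc_of_le (by norm_num : (0:ℝ) ≤ 1)] at ht
      intro h0
      linarith [ht.1]

private lemma aux_key {M : ℝ} (hM : 0 ≤ M) {z : ℂ} (hz : ‖z‖ < 1) (hz0 : z ≠ 0) :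
    ‖z‖ * (1 + 2 * M * (1 - 2 * Real.log 2))
      ≤ ‖(z + 2 * (M:ℂ) * ((1 - z) * Complex.log (1 - z) + z))‖ := by
  set g : ℝ → ℂ := fun t => ((1 : ℂ) - (t:ℂ)) * z ^ 2 / (1 - (t:ℂ) * z) with hgdef
  set L : ℂ := (1 - z) * Complex.log (1 - z) + z with hLdef
  set w : ℂ := z + 2 * (M:ℂ) * L with hwdef
  have hg : ContinuousOn g (Set.uIcc (0:ℝ) 1) := aux_contOn hz
  have hcg : ContinuousOn (fun t => (starRingEnd ℂ) z * g t) (Set.uIcc (0:ℝ) 1) :=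
    continuousOn_const.mul hg
  have hgi2 : IntervalIntegrable (fun t => (starRingEnd ℂ) z * g t)
      MeasureTheory.volume 0 1 := hcg.intervalIntegrable
  -- re of conj z * L as an integral
  have hre : ((starRingEnd ℂ) z * L).re
      = ∫ t in (0:ℝ)..1, ((starRingEnd ℂ) z * g t).re := by
    have h1 : (starRingEnd ℂ) z * L = ∫ t in (0:ℝ)..1, (starRingEnd ℂ) z * g t := by
      rw [intervalIntegral.integral_const_mul, hgdef]
      rw [aux_integral hz]
    rw [h1]
    have := Complex.reCLM.intervalIntegral_comp_comm hgi2
    simpa using this.symm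
  -- pointwise identity and bound
  have hpt : ∀ t ∈ Set.Icc (0:ℝ) 1,
      Complex.normSq z * ((1 - t) * (-1 / (1 + t))) ≤ ((starRingEnd ℂ) z * g t).re := by
    intro t ht
    have e1 : (starRingEnd ℂ) z * g t
        = ((Complex.normSq z : ℝ) : ℂ) * (((1 - t : ℝ) : ℂ) * (z / (1 - (t:ℂ) * z))) := by
      rw [Complex.normSq_eq_conj_mul_self, hgdef]
      push_cast
      ring
    rw [e1, Complex.re_ofReal_mul, Complex.re_ofReal_mul]
    have hb := aux_re_div hz ht.1 ht.2
    have h1t : (0:ℝ) ≤ 1 - t := by linarith [ht.2]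
    have := mul_le_mul_of_nonneg_left hb h1t
    exact mul_le_mul_of_nonneg_left this (Complex.normSq_nonneg z)
  -- integral bound
  have hlow : IntervalIntegrable
      (fun t : ℝ => Complex.normSq z * ((1 - t) * (-1 / (1 + t))))
      MeasureTheory.volume 0 1 := by
    apply ContinuousOn.intervalIntegrable
    apply continuousOn_const.mul
    apply ContinuousOn.mul (continuous_const.sub continuous_id).continuousOn
    apply ContinuousOn.div continuousOn_const (continuous_const.add continuous_id).continuousOn
    intro t ht
    rw [Set.uIcc_of_le (by norm_num : (0:ℝ) ≤ 1)] at ht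
    intro h0
    simp only [Pi.add_apply, id_eq] at h0
    linarith [ht.1]
  have hup : IntervalIntegrable (fun t => ((starRingEnd ℂ) z * g t).re)
      MeasureTheory.volume 0 1 :=
    (Complex.continuous_re.comp_continuousOn hcg).intervalIntegrable
  have hmono := intervalIntegral.integral_mono_on (by norm_num : (0:ℝ) ≤ 1) hlow hup hpt
  have hval : (∫ t in (0:ℝ)..1, Complex.normSq z * ((1 - t) * (-1 / (1 + t))))
      = Complex.normSq z * (1 - 2 * Real.log 2) := by
    rw [intervalIntegral.integral_const_mul]
    have : (∫ t in (0:ℝ)..1, (1 - t) * (-1 / (1 + t)))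
        = -∫ t in (0:ℝ)..1, (1 - t) / (1 + t) := by
      rw [← intervalIntegral.integral_neg]
      congr 1
      funext t
      ring
    rw [this, aux_real_integral]
    ring
  have hReL : Complex.normSq z * (1 - 2 * Real.log 2) ≤ ((starRingEnd ℂ) z * L).re := by
    rw [hre, ← hval]
    exact hmono
  -- assemble
  have e2 : ((starRingEnd ℂ) z * w).re
      = Complex.normSq z + 2 * M * ((starRingEnd ℂ) z * L).re := by
    have e3 : (starRingEnd ℂ) z * w
        = ((Complex.normSq z : ℝ) : ℂ) + ((2 * M : ℝ) : ℂ) * ((starRingEnd ℂ) z * L) := by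
      rw [Complex.normSq_eq_conj_mul_self, hwdef]
      push_cast
      ring
    rw [e3, Complex.add_re, Complex.ofReal_re, Complex.re_ofReal_mul]
  have key : Complex.normSq z * (1 + 2 * M * (1 - 2 * Real.log 2))
      ≤ ((starRingEnd ℂ) z * w).re := by
    rw [e2]
    nlinarith [mul_le_mul_of_nonneg_left hReL (by linarith : (0:ℝ) ≤ 2 * M)]
  have habs : ((starRingEnd ℂ) z * w).re ≤ ‖z‖ * ‖w‖ := by
    calc ((starRingEnd ℂ) z * w).re ≤ ‖(starRingEnd ℂ) z * w‖ := Complex.re_le_norm _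
    _ = ‖z‖ * ‖w‖ := by rw [norm_mul, Complex.norm_conj]
  have hzpos : 0 < ‖z‖ := norm_pos_iff.mpr hz0
  have : ‖z‖ * (‖z‖ * (1 + 2 * M * (1 - 2 * Real.log 2)))
      ≤ ‖z‖ * ‖w‖ := by
    calc ‖z‖ * (‖z‖ * (1 + 2 * M * (1 - 2 * Real.log 2)))
        = Complex.normSq z * (1 + 2 * M * (1 - 2 * Real.log 2)) := by
          rw [Complex.normSq_eq_norm_sq]; ring
      _ ≤ ((starRingEnd ℂ) z * w).re := key
      _ ≤ ‖z‖ * ‖w‖ := habs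
  exact le_of_mul_le_mul_left this hzpos

theorem liminf_growth_lower_bound (M : ℝ) (hM : 0 ≤ M) (f : ℂ → ℂ)
    (hf : ∀ z : ℂ, ‖z‖ < 1 →
      f z = z + 2 * (M : ℂ) * ∑' n : ℕ, z ^ (n + 2) / ((n + 2 : ℂ) * (n + 1 : ℂ))) :
    1 + 2 * M * (1 - 2 * Real.log 2) ≤
      Filter.liminf
        (fun r : ℝ => sInf ((fun z : ℂ => ‖f z‖) '' Metric.sphere (0 : ℂ) r))
        (nhdsWithin 1 (Set.Iio 1)) := by
  set c : ℝ := 1 + 2 * M * (1 - 2 * Real.log 2) with hc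
  set F : ℝ → ℝ :=
    fun r : ℝ => sInf ((fun z : ℂ => ‖f z‖) '' Metric.sphere (0 : ℂ) r) with hF
  have hF0 : ∀ r, 0 ≤ F r := by
    intro r
    apply Real.sInf_nonneg
    rintro x ⟨zz, -, rfl⟩
    exact norm_nonneg _
  have h_ev : ∀ᶠ r in nhdsWithin (1:ℝ) (Set.Iio 1), r * c ≤ F r := by
    have h1 : ∀ᶠ r in nhdsWithin (1:ℝ) (Set.Iio 1), (0:ℝ) < r :=
      eventually_nhdsWithin_of_eventually_nhds (eventually_gt_nhds one_pos)
    filter_upwards [h1, self_mem_nhdsWithin] with r hr0 hr1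
    have hr1' : r < 1 := hr1
    apply le_csInf
    · exact ⟨‖f (r:ℂ)‖, ⟨(r:ℂ), by
        simp [Complex.dist_eq, abs_of_pos hr0], rfl⟩⟩
    · rintro b ⟨zz, hzz, rfl⟩
      have hzr : ‖zz‖ = r := by
        rw [Metric.mem_sphere] at hzz
        rwa [Complex.dist_eq, sub_zero] at hzz
      have hzlt : ‖zz‖ < 1 := by rw [hzr]; exact hr1'
      have hz0 : zz ≠ 0 := by
        intro h
        rw [h] at hzr
        simp at hzr
        linarith
      show r * c ≤ ‖f zz‖
      rw [hf zz hzlt, (aux_hasSum hzlt).tsum_eq]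
      calc r * c = ‖zz‖ * c := by rw [hzr]
        _ ≤ _ := aux_key hM hzlt hz0
  have hlim : Tendsto (fun r : ℝ => r * c) (nhdsWithin (1:ℝ) (Set.Iio 1)) (nhds c) := by
    have h : Tendsto (fun r : ℝ => r * c) (nhds (1:ℝ)) (nhds (1 * c)) :=
      (continuous_mul_right c).tendsto 1
    rw [one_mul] at h
    exact h.mono_left nhdsWithin_le_nhds
  have hliminf_eq : Filter.liminf (fun r : ℝ => r * c)
      (nhdsWithin (1:ℝ) (Set.Iio 1)) = c := hlim.liminf_eq
  calc c = Filter.liminf (fun r : ℝ => r * c) (nhdsWithin (1:ℝ) (Set.Iio 1)) :=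
      hliminf_eq.symm
    _ ≤ Filter.liminf F (nhdsWithin (1:ℝ) (Set.Iio 1)) := by
      refine Filter.liminf_le_liminf h_ev hlim.isBoundedUnder_ge ?_
      -- coboundedness of F : need F frequently bounded above
      apply Filter.IsCoboundedUnder.of_frequently_le (a := 1 + 2 * M)
      have h1 : ∀ᶠ r in nhdsWithin (1:ℝ) (Set.Iio 1), (0:ℝ) < r :=
        eventually_nhdsWithin_of_eventually_nhds (eventually_gt_nhds one_pos)
      apply Filter.Eventually.frequently
      filter_upwards [h1, self_mem_nhdsWithin] with r hr0 hr1
      have hr1' : r < 1 := hr1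
      have hmem : ‖f (r:ℂ)‖ ∈
          (fun z : ℂ => ‖f z‖) '' Metric.sphere (0:ℂ) r :=
        ⟨(r:ℂ), by simp [Complex.dist_eq, abs_of_pos hr0], rfl⟩
      have hbdd : BddBelow ((fun z : ℂ => ‖f z‖) '' Metric.sphere (0:ℂ) r) := by
        refine ⟨0, ?_⟩
        rintro x ⟨zz, -, rfl⟩
        exact norm_nonneg _
      refine le_trans (csInf_le hbdd hmem) ?_
      -- bound |f r| for real r ∈ (0,1)
      have habs : ‖((r:ℂ))‖ < 1 := by
        rw [Complex.norm_real, Real.norm_eq_abs, abs_of_pos hr0]; exact hr1'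
      rw [hf _ habs, (aux_hasSum habs).tsum_eq]
      have h1r : (0:ℝ) < 1 - r := by linarith
      have hlog1 : Real.log (1 - r) ≤ (1 - r) - 1 := Real.log_le_sub_one_of_pos h1r
      have hlog2 : 1 - (1 - r)⁻¹ ≤ Real.log (1 - r) := Real.one_sub_inv_le_log_of_pos h1r
      have hveq : (1:ℂ) - (r:ℂ) = ((1 - r : ℝ) : ℂ) := by push_cast; ring
      have hcast : (r:ℂ) + 2 * (M:ℂ) * ((1 - (r:ℂ)) * Complex.log (1 - (r:ℂ)) + (r:ℂ))
          = ((r + 2 * M * ((1 - r) * Real.log (1 - r) + r) : ℝ) : ℂ) := by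
        rw [hveq, ← Complex.ofReal_log (le_of_lt h1r)]
        push_cast
        ring
      rw [hcast, Complex.norm_real, Real.norm_eq_abs]
      set v : ℝ := (1 - r) * Real.log (1 - r) + r with hv
      have hv0 : 0 ≤ v := by
        have : (1 - r) * (1 - (1 - r)⁻¹) ≤ (1 - r) * Real.log (1 - r) :=
          mul_le_mul_of_nonneg_left hlog2 (le_of_lt h1r)
        have he : (1 - r) * (1 - (1 - r)⁻¹) = -r := by
          field_simp
          ring
        rw [he] at this
        simp only [hv]
        linarith
      have hv1 : v ≤ r := by
        have : (1 - r) * Real.log (1 - r) ≤ (1 - r) * ((1 - r) - 1) :=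
          mul_le_mul_of_nonneg_left hlog1 (le_of_lt h1r)
        simp only [hv]
        nlinarith
      rw [_root_.abs_of_nonneg (by nlinarith)]
      nlinarith
end
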